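/- (Triangle equality) In a median algebra M, for all x,y,z the symmetric difference of the sets of hyper planes separating x from y and separating y from z equals the set of hyper planes separating x from z. Moreover, y ∈ [x,z] if and only if this symmetric difference is a disjoint union, i.e., Δ̄(x,y) ∩ Δ̄(y,z) = ∅. -/

import Mathlib

/-- A median algebra: a set with a ternary median operation satisfying (Med 1)-(Med 3). -/
structure MedianAlgebra (M : Type*) where
  m : M → M → M → M
  comm₁ : ∀ x y z, m x y z = m x z y
  comm₂ : ∀ x y z, m x y z = m y z x
  idem : ∀ x y, m x x y = x
  assoc : ∀ x y z u v, m (m x y z) u v = m x (m y u v) (m z u v)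

namespace MedianAlgebra

variable {M : Type*}

/-- The interval `[x,y] = {z | z = m x y z}`. -/
def I (A : MedianAlgebra M) (x y : M) : Set M := {z | z = A.m x y z}

/-- A subset is convex if it contains the interval between any two of its points. -/
def Conv (A : MedianAlgebra M) (C : Set M) : Prop :=
  ∀ x ∈ C, ∀ y ∈ C, A.I x y ⊆ C

/-- A half space is a convex set with convex complement. -/
def Halfspace (A : MedianAlgebra M) (H : Set M) : Prop :=
  A.Conv H ∧ A.Conv Hᶜ

/-- The convex hull of a set: the intersection of all convex sets containing it. -/
def hull (A : MedianAlgebra M) (X : Set M) : Set M :=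
  ⋂₀ {C | A.Conv C ∧ X ⊆ C}

/-- The separator `Δ(X,Y)`: half spaces containing `X` and disjoint from `Y`. -/
def sep (A : MedianAlgebra M) (X Y : Set M) : Set (Set M) :=
  {H | A.Halfspace H ∧ X ⊆ H ∧ Y ⊆ Hᶜ}

end MedianAlgebra

/-- The set of hyper planes (unordered pairs `{H, Hᶜ}`) separating `x` and `y`. -/
def MedianAlgebra.hsep {M : Type*} (A : MedianAlgebra M) (x y : M) : Set (Set (Set M)) :=
  {p | ∃ H : Set M, A.Halfspace H ∧ x ∈ H ∧ y ∉ H ∧ p = {H, Hᶜ}}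

/-!
A hyperplane `{H, Hᶜ}` separates two points exactly when they differ in membership in `H`, so
the separation indicators of the three pairs of points add up modulo two, which is the symmetric
difference identity. If `y ∈ [x, z]`, convexity of `H` and of `Hᶜ` prevents a hyperplane from
separating `y` from both `x` and `z`. Conversely, if `y ∉ [x, z]`, take by Zorn a maximal convex
`C ⊇ [x, z]` avoiding `y`. By maximality, for every `t ∉ C` some `c ∈ C` has `y ∈ [t, c]`;
two such relations for `u, v ∉ C` and the median identities put `y` between any `w ∈ [u, v]`
and a point of `C`, so `Cᶜ` is convex too and `C` is a half space containing `x, z` but not `y`.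
-/

namespace MedianAlgebra

variable {M : Type*} (A : MedianAlgebra M)

lemma mem_I {x y z : M} : z ∈ A.I x y ↔ z = A.m x y z := Iff.rfl

lemma m_swap₁₂ (x y z : M) : A.m x y z = A.m y x z := by rw [A.comm₂, A.comm₁]

lemma m_swap₁₃ (x y z : M) : A.m x y z = A.m z y x := by rw [A.comm₂, A.comm₂, A.comm₁]

lemma idem_outer (x y : M) : A.m x y x = x := by rw [A.comm₁]; exact A.idem x y

lemma idem_right (x y : M) : A.m x y y = y := by rw [A.comm₂]; exact A.idem y x

lemma assoc_idem (x u y v : M) : A.m (A.m x u y) u v = A.m x u (A.m y u v) := by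
  rw [A.assoc, A.idem]

lemma m_m_self (x y z : M) : A.m x y (A.m x y z) = A.m x y z := by
  rw [← A.comm₂ z x y, ← A.comm₂ (A.m z x y) x y, A.assoc, A.idem, A.idem_outer]

lemma left_mem_I (x y : M) : x ∈ A.I x y := (A.idem_outer x y).symm

lemma right_mem_I (x y : M) : y ∈ A.I x y := (A.idem_right x y).symm

lemma I_comm (x y : M) : A.I x y = A.I y x := by
  ext z
  rw [mem_I, mem_I, A.m_swap₁₂]

lemma m_mem_I (x y z : M) : A.m x y z ∈ A.I x y := (A.m_m_self x y z).symm

lemma m_proj_eq_of_mem_I {x y p : M} (hp : p ∈ A.I x y) (a b : M) :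
    A.m (A.m a x y) (A.m b x y) p = A.m (A.m a x y) b p := by
  rw [mem_I] at hp
  have hx : A.m x (A.m b x y) p = A.m x b p := by
    rw [A.m_swap₁₂ x, A.assoc_idem, A.m_swap₁₂ y x p, ← hp, A.m_swap₁₂ b x p]
  have hy : A.m y (A.m b x y) p = A.m y b p := by
    rw [A.m_swap₁₂ y, A.comm₁ b x y, A.assoc_idem, ← hp, A.m_swap₁₂ b y p]
  rw [A.assoc, hx, hy, ← A.assoc]

lemma m_distrib (x y a b c : M) :
    A.m x y (A.m a b c) = A.m (A.m x y a) (A.m x y b) (A.m x y c) := by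
  have hc : A.m c x y ∈ A.I x y := by rw [A.comm₂]; exact A.m_mem_I x y c
  have key : A.m (A.m a x y) (A.m b x y) (A.m c x y) = A.m a (A.m b x y) (A.m c x y) := by
    rw [A.m_swap₁₂ (A.m a x y), A.m_proj_eq_of_mem_I hc b a, A.m_swap₁₂]
  rw [← A.comm₂ (A.m a b c) x y, A.assoc, ← key, A.comm₂ a x y, A.comm₂ b x y, A.comm₂ c x y]

lemma mem_I_of_mem_I_of_mem_I {k y p c : M} (hk : k ∈ A.I y p) (hy : y ∈ A.I p c) :
    y ∈ A.I k c := by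
  rw [mem_I] at *
  have h : A.m k c y = A.m y (A.m p c y) (A.m k c y) := by
    conv_lhs => rw [hk]
    exact A.assoc y p k c y
  rwa [← hy, A.idem, eq_comm] at h

lemma m_mem_I_of_mem_I {a c u : M} (hu : u ∈ A.I a c) (w : M) : A.m a c w ∈ A.I w u := by
  rw [mem_I] at *
  have hcwu : A.m c w u = A.m (A.m a c w) c u := by
    conv_lhs => rw [hu]
    rw [A.m_swap₁₂ c w, ← A.assoc_idem w c a u, A.m_swap₁₃ w c a]
  have hproj : A.m a w (A.m a c w) = A.m a c w := by rw [A.comm₁ a c w, A.m_m_self]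
  symm
  calc A.m w u (A.m a c w)
      = A.m (A.m a w c) w u := by rw [A.comm₂ w, A.comm₂ u, A.comm₁ a c w]
    _ = A.m a w (A.m (A.m a c w) c u) := by rw [A.assoc_idem, hcwu]
    _ = A.m (A.m a w (A.m a c w)) (A.m a w c) (A.m a w u) := A.m_distrib a w _ c u
    _ = A.m a c w := by rw [hproj, A.comm₁ a w c, A.idem]

lemma conv_I (x y : M) : A.Conv (A.I x y) := by
  intro u hu v hv w hw
  rw [mem_I] at *
  have hw' : A.m w u v = w := by rw [A.comm₂]; exact hw.symm
  have h : A.m (A.m w u v) x y = A.m w u v := by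
    rw [A.assoc, A.comm₂ u, ← hu, A.comm₂ v, ← hv]
  rw [hw', A.comm₂] at h
  exact h.symm

lemma mem_I_m_of_mem_I_left {a c c' u v w : M} (hu : u ∈ A.I a c) (hv : v ∈ A.I a c')
    (hw : w ∈ A.I u v) : w ∈ A.I a (A.m c c' w) := by
  have hwv : w ∈ A.I v (A.m a c w) :=
    A.I_comm _ _ ▸ A.mem_I_of_mem_I_of_mem_I (A.m_mem_I_of_mem_I hu w) hw
  have hw' : w ∈ A.I (A.m a c w) (A.m a c' w) :=
    A.I_comm _ _ ▸ A.mem_I_of_mem_I_of_mem_I (A.m_mem_I_of_mem_I hv w) hwv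
  have expand : A.m a (A.m c c' w) w = A.m (A.m a c w) (A.m a c' w) w := by
    rw [A.comm₁ a _ w, A.m_distrib a w c c' w, A.idem_right, A.comm₁ a w c, A.comm₁ a w c']
  rw [mem_I, expand]
  exact hw'

lemma mem_I_m_of_mem_I_mid {u v w c₁ c₂ y : M} (h₁ : y ∈ A.I u c₁) (h₂ : y ∈ A.I v c₂)
    (hw : w ∈ A.I u v) : y ∈ A.I w (A.m c₁ c₂ y) := by
  have hyw : A.m y w c₁ ∈ A.I y (A.m y c₁ v) := by
    rw [mem_I] at h₁ hw ⊢
    conv_lhs => rw [A.comm₁ y w c₁, hw]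
    rw [A.m_distrib y c₁ u v w, A.m_swap₁₃ y c₁ u, ← h₁, A.comm₁ y c₁ w]
  have hyv : A.m y c₁ v ∈ A.I y v := by rw [A.comm₁]; exact A.m_mem_I y v c₁
  have hy : y ∈ A.I (A.m y w c₁) c₂ :=
    A.mem_I_of_mem_I_of_mem_I hyw (A.mem_I_of_mem_I_of_mem_I hyv h₂)
  rw [mem_I] at hy ⊢
  calc y = A.m (A.m c₁ y w) c₂ y := by rw [A.comm₂ c₁]; exact hy
    _ = A.m (A.m c₁ y w) (A.m c₂ y w) y := (A.m_proj_eq_of_mem_I (A.idem_outer y w).symm c₁ c₂).symm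
    _ = A.m y w (A.m c₁ c₂ y) := by
      rw [A.m_distrib, A.idem_outer, A.comm₂ c₁ y w, A.comm₂ c₂ y w]
    _ = A.m w (A.m c₁ c₂ y) y := A.comm₂ _ _ _

def join (t : M) (C : Set M) : Set M := {p | ∃ c ∈ C, p ∈ A.I t c}

lemma subset_join (t : M) (C : Set M) : C ⊆ A.join t C := fun c hc => ⟨c, hc, A.right_mem_I t c⟩

lemma mem_join_self {C : Set M} (hC : C.Nonempty) (t : M) : t ∈ A.join t C :=
  ⟨hC.some, hC.some_mem, A.left_mem_I t _⟩

lemma Conv.join {C : Set M} (hC : A.Conv C) (t : M) : A.Conv (A.join t C) := by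
  rintro p ⟨c₁, hc₁, hp⟩ q ⟨c₂, hc₂, hq⟩ r hr
  exact ⟨A.m c₁ c₂ r, hC c₁ hc₁ c₂ hc₂ (A.m_mem_I c₁ c₂ r), A.mem_I_m_of_mem_I_left hp hq hr⟩

lemma conv_sUnion_of_isChain {c : Set (Set M)} (hc : IsChain (· ⊆ ·) c)
    (h : ∀ C ∈ c, A.Conv C) : A.Conv (⋃₀ c) := by
  rintro a ⟨Ca, hCa, haC⟩ b ⟨Cb, hCb, hbC⟩ t ht
  rcases hc.total hCa hCb with hab | hba
  · exact ⟨Cb, hCb, h Cb hCb a (hab haC) b hbC ht⟩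
  · exact ⟨Ca, hCa, h Ca hCa a haC b (hba hbC) ht⟩

lemma conv_compl_of_maximal {C : Set M} {y : M} (hC : Maximal (fun C => A.Conv C ∧ y ∉ C) C)
    (hne : C.Nonempty) : A.Conv Cᶜ := by
  obtain ⟨⟨hCconv, hyC⟩, hmax⟩ := hC
  -- otherwise `A.join t C` would be a larger convex set avoiding `y`
  have hgate : ∀ t ∉ C, ∃ c ∈ C, y ∈ A.I t c := by
    intro t ht
    by_contra! h
    exact ht (hmax ⟨hCconv.join A t, fun ⟨c, hc, hy⟩ => h c hc hy⟩ (A.subset_join t C)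
      (A.mem_join_self hne t))
  intro u hu v hv w hw hwC
  obtain ⟨c₁, hc₁, hyu⟩ := hgate u hu
  obtain ⟨c₂, hc₂, hyv⟩ := hgate v hv
  exact hyC (hCconv w hwC _ (hCconv c₁ hc₁ c₂ hc₂ (A.m_mem_I c₁ c₂ y))
    (A.mem_I_m_of_mem_I_mid hyu hyv hw))

lemma halfspace_empty : A.Halfspace ∅ := by
  simp [Halfspace, Conv]

lemma Halfspace.compl {H : Set M} (hH : A.Halfspace H) : A.Halfspace Hᶜ :=
  ⟨hH.2, (compl_compl H).symm ▸ hH.1⟩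

theorem exists_halfspace_of_notMem {D : Set M} (hD : A.Conv D) {y : M} (hy : y ∉ D) :
    ∃ H, A.Halfspace H ∧ D ⊆ H ∧ y ∉ H := by
  rcases D.eq_empty_or_nonempty with rfl | hne
  · exact ⟨∅, A.halfspace_empty, subset_rfl, hy⟩
  obtain ⟨C, hDC, hC⟩ := zorn_subset_nonempty {C | A.Conv C ∧ y ∉ C}
    (fun c hcS hchain _ => ⟨⋃₀ c, ⟨A.conv_sUnion_of_isChain hchain fun C hC => (hcS hC).1,
      fun ⟨C, hC, hyC⟩ => (hcS hC).2 hyC⟩, fun _ => Set.subset_sUnion_of_mem⟩) D ⟨hD, hy⟩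
  exact ⟨C, ⟨hC.1.1, A.conv_compl_of_maximal hC (hne.mono hDC)⟩, hDC, hC.1.2⟩

lemma exists_halfspace_of_mem_hsep {x y : M} {p : Set (Set M)} (hp : p ∈ A.hsep x y) :
    ∃ H, A.Halfspace H ∧ p = {H, Hᶜ} :=
  let ⟨H, hH, _, _, e⟩ := hp; ⟨H, hH, e⟩

lemma pair_mem_hsep_iff {H : Set M} (hH : A.Halfspace H) (x y : M) :
    {H, Hᶜ} ∈ A.hsep x y ↔ (x ∈ H ↔ y ∉ H) := by
  constructor
  · rintro ⟨K, -, hxK, hyK, hHK⟩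
    have hK : K ∈ ({H, Hᶜ} : Set (Set M)) := hHK ▸ Set.mem_insert K _
    rcases hK with rfl | rfl
    · tauto
    · simp only [Set.mem_compl_iff, not_not] at hxK hyK
      tauto
  · intro h
    by_cases hx : x ∈ H
    · exact ⟨H, hH, hx, h.1 hx, rfl⟩
    · exact ⟨Hᶜ, hH.compl, hx, not_not.2 (by tauto), by rw [compl_compl, Set.pair_comm]⟩

lemma symmDiff_hsep (x y z : M) : symmDiff (A.hsep x y) (A.hsep y z) = A.hsep x z := by
  ext p
  by_cases hp : ∃ H, A.Halfspace H ∧ p = {H, Hᶜ}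
  · obtain ⟨H, hH, rfl⟩ := hp
    simp only [Set.mem_symmDiff, A.pair_mem_hsep_iff hH]
    tauto
  · have hnot : ∀ a b, p ∉ A.hsep a b := fun a b h => hp (A.exists_halfspace_of_mem_hsep h)
    simp [Set.mem_symmDiff, hnot]

lemma mem_I_iff_hsep_inter_eq_empty (x y z : M) :
    y ∈ A.I x z ↔ A.hsep x y ∩ A.hsep y z = ∅ := by
  rw [Set.eq_empty_iff_forall_notMem]
  constructor
  · rintro hy p ⟨hxy, hyz⟩
    obtain ⟨H, hH, rfl⟩ := A.exists_halfspace_of_mem_hsep hxy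
    rw [A.pair_mem_hsep_iff hH] at hxy hyz
    by_cases hyH : y ∈ H
    · exact hH.2 x (by tauto) z (by tauto) hy hyH
    · exact hyH (hH.1 x (by tauto) z (by tauto) hy)
  · intro h
    by_contra hy
    obtain ⟨H, hH, hIH, hyH⟩ := A.exists_halfspace_of_notMem (A.conv_I x z) hy
    have hx := hIH (A.left_mem_I x z)
    have hz := hIH (A.right_mem_I x z)
    exact h {H, Hᶜ} ⟨(A.pair_mem_hsep_iff hH x y).2 (by tauto),
      (A.pair_mem_hsep_iff hH y z).2 (by tauto)⟩

end MedianAlgebra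

/-- Triangle equality for hyper planes, and characterization of betweenness. -/
theorem triangle_equality {M : Type*} (A : MedianAlgebra M) (x y z : M) :
    symmDiff (A.hsep x y) (A.hsep y z) = A.hsep x z ∧
    (y ∈ A.I x z ↔ A.hsep x y ∩ A.hsep y z = ∅) :=
  ⟨A.symmDiff_hsep x y z, A.mem_I_iff_hsep_inter_eq_empty x y z⟩
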